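/- Let T > 0 and let (λ_n)_{n≥1} be a strictly increasing sequence of real numbers with λ_1 > 0. Then for every m ≥ 1 and every integer M ≥ m: d_{T,m} ≤ ( ∏_{i=1, i≠m}^{M+1} |λ_i − λ_m| ) · ( ∫_0^T (s^{2M}/(M!)²) e^{−2λ_1 s} ds )^{1/2} ≤ ( ∏_{i=1, i≠m}^{M+1} |λ_i − λ_m| ) · (T^M/M!) · √( 2T / (2M + 1 + 2Tλ_1) ). -/

import Mathlib

/-!
Let `w_i = ∏_{j ≠ i} (λ_i - λ_j)⁻¹` be the nodal weights of `λ_1, …, λ_{M+1}`, so that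
`E(t) = ∑ w_i e^{-λ_i t}` is the divided difference of `x ↦ e^{-x t}` at these nodes. Since
`w_m ≠ 0`, `E / w_m` is `e^{-λ_m t}` minus a combination of the other exponentials, hence
`d_{T,m} ≤ |w_m|⁻¹ ‖E‖_{L²(0,T)}`. The weights of two or more nodes sum to zero, and this turns
adding a node into a convolution, `E_{s ∪ {a}}(t) = -∫_0^t e^{-λ_a (t-u)} E_s(u) du`; by induction
`|E(t)| ≤ t^M e^{-λ_1 t} / M!`. Finally `∫_0^T s^{2M} e^{-2λ_1 s} ds` is at most both
`T^{2M+1} / (2M+1)` and `T^{2M} / (2λ_1)`, and the smaller of two positive numbers is at most their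
harmonic mean.
-/

open MeasureTheory

/-- The distance in `L²(0,T)` from `t ↦ exp (-λ_m t)` to the closed linear span of the
functions `t ↦ exp (-λ_k t)`, `k ≥ 1`, `k ≠ m`. -/
noncomputable def dTm (T : ℝ) (lam : ℕ → ℝ) (m : ℕ) : ℝ :=
  sInf { r : ℝ | ∃ (s : Finset ℕ) (c : ℕ → ℝ),
    (∀ k ∈ s, 1 ≤ k ∧ k ≠ m) ∧
    r = (∫ t in Set.Ioc 0 T,
        (Real.exp (-lam m * t) - ∑ k ∈ s, c k * Real.exp (-lam k * t)) ^ 2) ^ ((1:ℝ)/2) }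

open Finset Real Lagrange
open scoped Nat

namespace Lagrange

variable {F ι : Type*} [Field F] [DecidableEq ι] {s : Finset ι} {v : ι → F}

theorem sum_nodalWeight_eq_zero (hvs : Set.InjOn v s) (hs : 2 ≤ #s) :
    ∑ i ∈ s, nodalWeight s v i = 0 := by
  have h := coeff_eq_sum hvs (P := 1) (by
    rw [Polynomial.degree_one]; exact_mod_cast (by omega : 0 < #s))
  rw [Polynomial.coeff_one, if_neg (by omega)] at h
  simpa [nodalWeight, prod_inv_distrib, div_eq_mul_inv] using h.symm

theorem nodalWeight_insert {a i : ι} (ha : a ∉ s) (hi : i ∈ s) :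
    nodalWeight (insert a s) v i = (v i - v a)⁻¹ * nodalWeight s v i := by
  rw [nodalWeight, erase_insert_of_ne (ne_of_mem_of_not_mem hi ha).symm,
    prod_insert (fun h => ha (mem_of_mem_erase h)), nodalWeight]

theorem abs_inv_nodalWeight [LinearOrder F] [IsStrictOrderedRing F] (m : ι) :
    |(nodalWeight s v m)⁻¹| = ∏ j ∈ s.erase m, |v j - v m| := by
  rw [nodalWeight, prod_inv_distrib, inv_inv, abs_prod]
  exact prod_congr rfl fun j _ => abs_sub_comm _ _

end Lagrange

theorem Finset.sum_insert_mul_eq_sum_mul_sub {R ι : Type*} [CommRing R] [DecidableEq ι]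
    {s : Finset ι} {a : ι} {w f : ι → R} (ha : a ∉ s) (hw : ∑ i ∈ insert a s, w i = 0) :
    ∑ i ∈ insert a s, w i * f i = ∑ i ∈ s, w i * (f i - f a) := by
  rw [sum_insert ha] at hw
  simp only [sum_insert ha, mul_sub, sum_sub_distrib, ← sum_mul]
  linear_combination f a * hw

theorem integral_exp_neg_mul_sub_mul_exp_neg_mul {a b : ℝ} (hab : a ≠ b) (t : ℝ) :
    ∫ u in (0 : ℝ)..t, exp (-a * (t - u)) * exp (-b * u) =
      (exp (-b * t) - exp (-a * t)) / (a - b) := by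
  have hab' : a - b ≠ 0 := sub_ne_zero.mpr hab
  have hderiv : ∀ u, HasDerivAt (fun u => exp (-a * t + (a - b) * u) / (a - b))
      (exp (-a * (t - u)) * exp (-b * u)) u := by
    intro u
    have h := (((hasDerivAt_id u).const_mul (a - b)).const_add (-a * t)).exp.div_const (a - b)
    refine h.congr_deriv ?_
    rw [← exp_add, id]; field_simp; ring_nf
  rw [intervalIntegral.integral_eq_sub_of_hasDerivAt (fun u _ => hderiv u)
    (by apply Continuous.intervalIntegrable; fun_prop)]
  field_simp; ring_nf

section ExpDivDiff

variable {ι : Type*} [DecidableEq ι]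

noncomputable def expDivDiff (s : Finset ι) (v : ι → ℝ) (t : ℝ) : ℝ :=
  ∑ i ∈ s, nodalWeight s v i * exp (-v i * t)

variable {s : Finset ι} {v : ι → ℝ}

@[fun_prop]
theorem continuous_expDivDiff (s : Finset ι) (v : ι → ℝ) : Continuous (expDivDiff s v) := by
  unfold expDivDiff; fun_prop

theorem expDivDiff_insert {a : ι} (ha : a ∉ s) (hs : s.Nonempty)
    (hvs : Set.InjOn v ↑(insert a s)) (t : ℝ) :
    expDivDiff (insert a s) v t = -∫ u in (0 : ℝ)..t, exp (-v a * (t - u)) * expDivDiff s v u := by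
  have hzero := sum_nodalWeight_eq_zero hvs (by
    rw [card_insert_of_notMem ha]; have := hs.card_pos; omega)
  have hne : ∀ i ∈ s, v a ≠ v i := fun i hi h =>
    ne_of_mem_of_not_mem hi ha (hvs (mem_insert_of_mem hi) (mem_insert_self a s) h.symm)
  simp only [expDivDiff, sum_insert_mul_eq_sum_mul_sub ha hzero, mul_sum]
  rw [intervalIntegral.integral_finsetSum (fun i _ => by
    apply Continuous.intervalIntegrable; fun_prop), ← sum_neg_distrib]
  refine sum_congr rfl fun i hi => ?_
  simp only [mul_left_comm _ (nodalWeight s v i), intervalIntegral.integral_const_mul,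
    integral_exp_neg_mul_sub_mul_exp_neg_mul (hne i hi), nodalWeight_insert ha hi]
  have h1 : v i - v a ≠ 0 := sub_ne_zero.mpr (hne i hi).symm
  have h2 : v a - v i ≠ 0 := sub_ne_zero.mpr (hne i hi)
  field_simp
  ring

theorem expDivDiff_singleton (a : ι) (v : ι → ℝ) (t : ℝ) :
    expDivDiff {a} v t = exp (-v a * t) := by
  simp [expDivDiff, nodalWeight]

theorem abs_expDivDiff_le {c : ℝ} (hs : s.Nonempty) (hvs : Set.InjOn v s)
    (hc : ∀ i ∈ s, c ≤ v i) {t : ℝ} (ht : 0 ≤ t) :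
    |expDivDiff s v t| ≤ t ^ (#s - 1) / (#s - 1)! * exp (-c * t) := by
  induction hs using Finset.Nonempty.cons_induction generalizing t with
  | singleton a =>
    rw [expDivDiff_singleton, abs_of_pos (exp_pos _)]
    simpa using exp_le_exp.mpr (by nlinarith [hc a (mem_singleton_self a)])
  | cons a s ha hs ih =>
    rw [cons_eq_insert] at hvs hc ⊢
    obtain ⟨n, hn⟩ : ∃ n, #s = n + 1 := Nat.exists_eq_add_one.mpr hs.card_pos
    rw [card_insert_of_notMem ha, hn, expDivDiff_insert ha hs hvs, abs_neg, Nat.add_sub_cancel]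
    have ih' : ∀ u, 0 ≤ u → |expDivDiff s v u| ≤ u ^ n / n ! * exp (-c * u) := fun u hu => by
      simpa [hn] using ih (hvs.mono (by simp)) (fun i hi => hc i (mem_insert_of_mem hi)) hu
    calc |∫ u in (0 : ℝ)..t, exp (-v a * (t - u)) * expDivDiff s v u|
        ≤ ∫ u in (0 : ℝ)..t, exp (-c * (t - u)) * (u ^ n / n ! * exp (-c * u)) := by
          refine intervalIntegral.abs_integral_le_integral_abs ht |>.trans <|
            intervalIntegral.integral_mono_on ht (by apply Continuous.intervalIntegrable; fun_prop)
              (by apply Continuous.intervalIntegrable; fun_prop) fun u hu => ?_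
          rw [abs_mul, abs_of_pos (exp_pos _)]
          refine mul_le_mul (exp_le_exp.mpr ?_) (ih' u hu.1) (abs_nonneg _) (exp_pos _).le
          nlinarith [hc a (mem_insert_self a s), hu.2]
      _ = exp (-c * t) * ∫ u in (0 : ℝ)..t, u ^ n / n ! := by
          rw [← intervalIntegral.integral_const_mul]
          refine intervalIntegral.integral_congr fun u _ => ?_
          rw [show exp (-c * t) = exp (-c * (t - u)) * exp (-c * u) by rw [← exp_add]; ring_nf]
          ring
      _ = t ^ (n + 1) / (n + 1)! * exp (-c * t) := by
          rw [intervalIntegral.integral_div, integral_pow, Nat.factorial_succ]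
          push_cast
          field_simp
          ring

theorem sq_expDivDiff_le {c : ℝ} (hs : s.Nonempty) (hvs : Set.InjOn v s)
    (hc : ∀ i ∈ s, c ≤ v i) {t : ℝ} (ht : 0 ≤ t) :
    expDivDiff s v t ^ 2 ≤ t ^ (2 * (#s - 1)) / ((#s - 1)! : ℝ) ^ 2 * exp (-2 * c * t) := by
  have h := abs_expDivDiff_le hs hvs hc ht
  calc _ ≤ (t ^ (#s - 1) / (#s - 1)! * exp (-c * t)) ^ 2 :=
        sq_le_sq' (abs_le.mp h).1 (abs_le.mp h).2
    _ = _ := by rw [mul_pow, ← exp_nat_mul]; ring_nf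

theorem inv_nodalWeight_mul_expDivDiff {m : ι} (hm : m ∈ s) (hvs : Set.InjOn v s) (t : ℝ) :
    (nodalWeight s v m)⁻¹ * expDivDiff s v t = exp (-v m * t) -
      ∑ k ∈ s.erase m, -nodalWeight s v k / nodalWeight s v m * exp (-v k * t) := by
  rw [expDivDiff, ← add_sum_erase s _ hm, mul_add,
    inv_mul_cancel_left₀ (nodalWeight_ne_zero hvs hm), mul_sum, sub_eq_add_neg, ← sum_neg_distrib]
  congr 1
  refine sum_congr rfl fun k _ => ?_
  ring

end ExpDivDiff

theorem rpow_half_integral_const_mul_sq_le {α : Type*} [MeasurableSpace α] {μ : Measure α}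
    {f g : α → ℝ} (C : ℝ) (hg : Integrable g μ) (hfg : ∀ᵐ x ∂μ, f x ^ 2 ≤ g x) :
    (∫ x, (C * f x) ^ 2 ∂μ) ^ ((1 : ℝ) / 2) ≤ |C| * (∫ x, g x ∂μ) ^ ((1 : ℝ) / 2) := by
  have hg0 : 0 ≤ ∫ x, g x ∂μ := integral_nonneg_of_ae (hfg.mono fun x hx => (sq_nonneg _).trans hx)
  have hle : ∫ x, (C * f x) ^ 2 ∂μ ≤ C ^ 2 * ∫ x, g x ∂μ := by
    rw [← integral_const_mul]
    refine integral_mono_of_nonneg (ae_of_all _ fun x => sq_nonneg _) (hg.const_mul _) ?_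
    filter_upwards [hfg] with x hx
    rw [mul_pow]
    exact mul_le_mul_of_nonneg_left hx (sq_nonneg C)
  calc (∫ x, (C * f x) ^ 2 ∂μ) ^ ((1 : ℝ) / 2)
      ≤ (C ^ 2 * ∫ x, g x ∂μ) ^ ((1 : ℝ) / 2) :=
        rpow_le_rpow (integral_nonneg fun x => sq_nonneg _) hle (by norm_num)
    _ = |C| * (∫ x, g x ∂μ) ^ ((1 : ℝ) / 2) := by
        rw [mul_rpow (sq_nonneg C) hg0, ← sqrt_eq_rpow, sqrt_sq_eq_abs]

theorem setIntegral_pow_mul_exp_neg_mul_le (n : ℕ) {a T : ℝ} (ha : 0 ≤ a) (hT : 0 ≤ T) :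
    ∫ s in Set.Ioc 0 T, s ^ n * exp (-a * s) ≤ T ^ n * (2 * T / (n + 1 + a * T)) := by
  have hpow : ∫ s in Set.Ioc 0 T, s ^ n * exp (-a * s) ≤ T ^ (n + 1) / (n + 1) := by
    calc _ ≤ ∫ s in Set.Ioc 0 T, s ^ n := by
          refine setIntegral_mono_on (Continuous.integrableOn_Ioc (by fun_prop))
            (Continuous.integrableOn_Ioc (by fun_prop)) measurableSet_Ioc fun s hs => ?_
          exact mul_le_of_le_one_right (pow_nonneg hs.1.le n)
            (exp_le_one_iff.mpr (by nlinarith [hs.1]))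
      _ = T ^ (n + 1) / (n + 1) := by
          rw [← intervalIntegral.integral_of_le hT, integral_pow]
          simp
  have hexp (ha : 0 < a) : ∫ s in Set.Ioc 0 T, s ^ n * exp (-a * s) ≤ T ^ n / a := by
    calc _ ≤ ∫ s in Set.Ioc 0 T, T ^ n * exp (-a * s) := by
          refine setIntegral_mono_on (Continuous.integrableOn_Ioc (by fun_prop))
            (Continuous.integrableOn_Ioc (by fun_prop)) measurableSet_Ioc fun s hs => ?_
          exact mul_le_mul_of_nonneg_right (pow_le_pow_left₀ hs.1.le hs.2 n) (exp_pos _).le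
      _ ≤ ∫ s in Set.Ioi 0, T ^ n * exp (-a * s) :=
          setIntegral_mono_set ((integrableOn_exp_mul_Ioi (neg_neg_of_pos ha) 0).const_mul _)
            (ae_of_all _ fun s => by positivity) Set.Ioc_subset_Ioi_self.eventuallyLE
      _ = T ^ n / a := by
          rw [integral_const_mul, integral_exp_mul_Ioi (neg_neg_of_pos ha)]
          field_simp
          simp
  rcases le_or_gt (a * T) (n + 1) with h | h
  · calc _ ≤ T ^ (n + 1) / (n + 1) := hpow
      _ = T ^ n * (T / (n + 1)) := by ring
      _ ≤ _ := by
        refine mul_le_mul_of_nonneg_left ?_ (by positivity)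
        rw [div_le_div_iff₀ (by positivity) (by positivity)]
        nlinarith
  · have ha' : 0 < a := by
      by_contra! h'
      nlinarith
    calc _ ≤ T ^ n / a := hexp ha'
      _ = T ^ n * (1 / a) := by ring
      _ ≤ _ := by
        refine mul_le_mul_of_nonneg_left ?_ (by positivity)
        rw [div_le_div_iff₀ ha' (by positivity)]
        linarith

theorem rpow_half_setIntegral_pow_div_factorial_sq_mul_exp_le (M : ℕ) {a T : ℝ} (ha : 0 ≤ a)
    (hT : 0 ≤ T) :
    (∫ s in Set.Ioc 0 T, s ^ (2 * M) / (M ! : ℝ) ^ 2 * exp (-2 * a * s)) ^ ((1 : ℝ) / 2) ≤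
      T ^ M / M ! * sqrt (2 * T / (2 * (M : ℝ) + 1 + 2 * T * a)) := by
  have hJ := setIntegral_pow_mul_exp_neg_mul_le (2 * M) (by positivity : 0 ≤ 2 * a) hT
  have hI : ∫ s in Set.Ioc 0 T, s ^ (2 * M) / (M ! : ℝ) ^ 2 * exp (-2 * a * s) =
      ((M ! : ℝ) ^ 2)⁻¹ * ∫ s in Set.Ioc 0 T, s ^ (2 * M) * exp (-(2 * a) * s) := by
    rw [← integral_const_mul]
    congr with s
    ring_nf
  have hbound : ((M ! : ℝ) ^ 2)⁻¹ * ∫ s in Set.Ioc 0 T, s ^ (2 * M) * exp (-(2 * a) * s) ≤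
      (T ^ M / M !) ^ 2 * (2 * T / (2 * (M : ℝ) + 1 + 2 * T * a)) := by
    calc _ ≤ ((M ! : ℝ) ^ 2)⁻¹ * (T ^ (2 * M) * (2 * T / ((2 * M : ℕ) + 1 + 2 * a * T))) :=
          mul_le_mul_of_nonneg_left hJ (by positivity)
      _ = _ := by push_cast; ring
  rw [← sqrt_eq_rpow, hI]
  calc _ ≤ sqrt ((T ^ M / M !) ^ 2 * (2 * T / (2 * (M : ℝ) + 1 + 2 * T * a))) :=
        sqrt_le_sqrt hbound
    _ = _ := by rw [sqrt_mul (sq_nonneg _), sqrt_sq (by positivity)]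

theorem dTm_le (T : ℝ) (lam : ℕ → ℝ) {m : ℕ} {s : Finset ℕ} (hs : ∀ k ∈ s, 1 ≤ k ∧ k ≠ m)
    (c : ℕ → ℝ) :
    dTm T lam m ≤ (∫ t in Set.Ioc 0 T,
      (exp (-lam m * t) - ∑ k ∈ s, c k * exp (-lam k * t)) ^ 2) ^ ((1 : ℝ) / 2) := by
  refine csInf_le ⟨0, ?_⟩ ⟨s, c, hs, rfl⟩
  rintro r ⟨s', c', -, rfl⟩
  exact rpow_nonneg (integral_nonneg fun t => sq_nonneg _) _

theorem dTm_le_of_sq_expDivDiff_le {T : ℝ} {lam : ℕ → ℝ} {m : ℕ} {S : Finset ℕ}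
    (hS : ∀ k ∈ S, 1 ≤ k) (hm : m ∈ S) (hinj : Set.InjOn lam S) {g : ℝ → ℝ}
    (hg : IntegrableOn g (Set.Ioc 0 T)) (hEg : ∀ t ∈ Set.Ioc 0 T, expDivDiff S lam t ^ 2 ≤ g t) :
    dTm T lam m ≤ |(nodalWeight S lam m)⁻¹| * (∫ t in Set.Ioc 0 T, g t) ^ ((1 : ℝ) / 2) := by
  calc dTm T lam m ≤ _ := dTm_le T lam (s := S.erase m)
        (fun k hk => ⟨hS k (mem_of_mem_erase hk), ne_of_mem_erase hk⟩)
        fun k => -nodalWeight S lam k / nodalWeight S lam m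
    _ = (∫ t in Set.Ioc 0 T, ((nodalWeight S lam m)⁻¹ * expDivDiff S lam t) ^ 2)
          ^ ((1 : ℝ) / 2) := by
        simp_rw [inv_nodalWeight_mul_expDivDiff hm hinj]
    _ ≤ _ := rpow_half_integral_const_mul_sq_le _ hg
          (ae_restrict_of_forall_mem measurableSet_Ioc hEg)

theorem dist_upper_bound (T : ℝ) (hT : 0 < T) (lam : ℕ → ℝ) (hl1 : 0 < lam 1)
    (hmono : ∀ n, 1 ≤ n → lam n < lam (n + 1)) :
    ∀ m, 1 ≤ m → ∀ M : ℕ, m ≤ M →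
      dTm T lam m ≤
        (∏ i ∈ (Finset.Icc 1 (M + 1)).erase m, |lam i - lam m|) *
          (∫ s in Set.Ioc 0 T,
            s ^ (2 * M) / (Nat.factorial M : ℝ) ^ 2 * Real.exp (-2 * lam 1 * s))
            ^ ((1:ℝ)/2) ∧
      (∏ i ∈ (Finset.Icc 1 (M + 1)).erase m, |lam i - lam m|) *
          (∫ s in Set.Ioc 0 T,
            s ^ (2 * M) / (Nat.factorial M : ℝ) ^ 2 * Real.exp (-2 * lam 1 * s))
            ^ ((1:ℝ)/2) ≤
        (∏ i ∈ (Finset.Icc 1 (M + 1)).erase m, |lam i - lam m|) *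
          (T ^ M / (Nat.factorial M : ℝ)) *
          Real.sqrt (2 * T / (2 * (M : ℝ) + 1 + 2 * T * lam 1)) := by
  intro m hm M hM
  set S := Finset.Icc 1 (M + 1)
  have hlam : StrictMonoOn lam (Set.Ici 1) := strictMonoOn_Ici_of_pred_lt fun k hk => by
    simpa [Nat.sub_add_cancel (by omega : 1 ≤ k)] using hmono (k - 1) (by omega)
  have hS : ∀ k ∈ S, 1 ≤ k := fun k hk => (mem_Icc.mp hk).1
  have hmS : m ∈ S := mem_Icc.mpr ⟨hm, by omega⟩
  have hinj : Set.InjOn lam S := hlam.injOn.mono hS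
  have hlam1 : ∀ k ∈ S, lam 1 ≤ lam k := fun k hk =>
    hlam.monotoneOn Set.self_mem_Ici (hS k hk) (hS k hk)
  refine ⟨?_, ?_⟩
  · rw [← abs_inv_nodalWeight]
    refine dTm_le_of_sq_expDivDiff_le hS hmS hinj (Continuous.integrableOn_Ioc (by fun_prop))
      fun t ht => ?_
    simpa [S] using sq_expDivDiff_le ⟨m, hmS⟩ hinj hlam1 ht.1.le
  · rw [mul_assoc]
    exact mul_le_mul_of_nonneg_left (rpow_half_setIntegral_pow_div_factorial_sq_mul_exp_le M
      hl1.le hT.le) (prod_nonneg fun i _ => abs_nonneg _)
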